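/- Let q and q* be the forward and backward quantities for a fixed response sequence y. Then for every t with 0 ≤ t ≤ T−1, Σ_{u ∈ Fin k} q(t, u) · q*(t, u) = f(y); in particular the manifest probability can be recovered from the forward–backward decomposition at any time point. -/

import Mathlib

/-!
Latent Markov model with `k ≥ 1` latent states, `l ≥ 1` response categories and
`T + 1 ≥ 1` time occasions (occasions are indexed by `0, …, T`, so that the last
occasion, written `T − 1` in the paper for `T` occasions, is here `T`).
-/

/-- Extension of a partial latent path `ub : {0,…,t} → Fin k` to all of `ℕ`;
for `s ≤ t` it returns `ub s`. -/
def extPath {k t : ℕ} (u : Fin (t + 1) → Fin k) (s : ℕ) : Fin k :=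
  u ⟨min s t, Nat.lt_succ_of_le (min_le_right s t)⟩

/-- The partial weight of a latent path up to occasion `t`.
For `t = T` (the last occasion) this is the full weight `w(ub)`. -/
noncomputable def pweight {k l : ℕ} (π : Fin k → ℝ) (P : ℕ → Fin k → Fin k → ℝ)
    (Φ : ℕ → Fin l → Fin k → ℝ) (y : ℕ → Fin l) (t : ℕ) (u : ℕ → Fin k) : ℝ :=
  π (u 0) * (∏ s ∈ Finset.Icc 1 t, P s (u (s - 1)) (u s)) *
    ∏ s ∈ Finset.range (t + 1), Φ s (y s) (u s)

/-!
Expanding `q(t, v)` along its recursion shows that it is the total weight, up to occasion `t`,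
of the latent paths ending in `v`. The backward recursion for `q*(t, ·)` and the forward
recursion for `q(t + 1, ·)` are the two ways of bracketing the same double sum
`Σ_{u,v} q(t,u) π^{(t+1)}(u,v) φ^{(t+1)}(y(t+1),v) q*(t+1,v)`, so `Σ_u q(t,u) q*(t,u)` does not
depend on `t`; at the last occasion `q* = 1` and the sum is the total weight of all paths, `f(y)`.
-/

theorem Fintype.sum_fin_succ_pi_eq_sum_snoc {α M : Type*} [Fintype α] [AddCommMonoid M] {n : ℕ}
    (f : (Fin (n + 1) → α) → M) :
    ∑ ub, f ub = ∑ v, ∑ ub : Fin n → α, f (Fin.snoc ub v) := by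
  rw [← (Fin.snocEquiv fun _ => α).sum_comp, Fintype.sum_prod_type]
  rfl

section extPath

variable {k t : ℕ}

theorem extPath_snoc_of_lt (ub : Fin t → Fin k) (v : Fin k) {s : ℕ} (hs : s < t) :
    extPath (Fin.snoc ub v) s = ub ⟨s, hs⟩ := by
  simp [extPath, Fin.snoc, Nat.min_eq_left hs.le, hs]

theorem extPath_snoc_of_ge (ub : Fin t → Fin k) (v : Fin k) {s : ℕ} (hs : t ≤ s) :
    extPath (Fin.snoc ub v) s = v := by
  simp [extPath, Fin.snoc, Nat.min_eq_right hs]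

theorem extPath_snoc_of_le (ub : Fin (t + 1) → Fin k) (v : Fin k) {s : ℕ} (hs : s ≤ t) :
    extPath (Fin.snoc ub v) s = extPath ub s := by
  rw [extPath_snoc_of_lt _ _ (Nat.lt_succ_of_le hs)]
  simp [extPath, Nat.min_eq_left hs]

end extPath

section pweight

variable {k l : ℕ} (π : Fin k → ℝ) (P : ℕ → Fin k → Fin k → ℝ) (Φ : ℕ → Fin l → Fin k → ℝ)
  (y : ℕ → Fin l)

theorem pweight_congr {t : ℕ} {w w' : ℕ → Fin k} (h : ∀ s ≤ t, w s = w' s) :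
    pweight π P Φ y t w = pweight π P Φ y t w' := by
  unfold pweight
  rw [h 0 t.zero_le]
  congr 1
  · congr 1
    refine Finset.prod_congr rfl fun s hs => ?_
    have hst := (Finset.mem_Icc.mp hs).2
    rw [h (s - 1) (by omega), h s hst]
  · refine Finset.prod_congr rfl fun s hs => ?_
    rw [h s (Nat.lt_succ_iff.mp (Finset.mem_range.mp hs))]

theorem pweight_succ (t : ℕ) (w : ℕ → Fin k) :
    pweight π P Φ y (t + 1) w =
      pweight π P Φ y t w * (P (t + 1) (w t) (w (t + 1)) * Φ (t + 1) (y (t + 1)) (w (t + 1))) := by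
  unfold pweight
  rw [Finset.prod_Icc_succ_top (by omega), Finset.prod_range_succ, Nat.add_sub_cancel]
  ring

theorem pweight_extPath_snoc_snoc {t : ℕ} (ub : Fin t → Fin k) (u v : Fin k) :
    pweight π P Φ y (t + 1) (extPath (Fin.snoc (Fin.snoc ub u) v)) =
      pweight π P Φ y t (extPath (Fin.snoc ub u)) * (P (t + 1) u v * Φ (t + 1) (y (t + 1)) v) := by
  rw [pweight_succ, extPath_snoc_of_ge _ _ le_rfl, extPath_snoc_of_le _ _ le_rfl,
    extPath_snoc_of_ge _ _ le_rfl,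
    pweight_congr π P Φ y fun s hs => extPath_snoc_of_le (Fin.snoc ub u) v hs]

theorem forward_eq_sum_pweight {T : ℕ} (q : ℕ → Fin k → ℝ)
    (hq0 : ∀ u, q 0 u = π u * Φ 0 (y 0) u)
    (hqrec : ∀ t, 1 ≤ t → t ≤ T → ∀ v,
      q t v = (∑ u, q (t - 1) u * P t u v) * Φ t (y t) v) :
    ∀ t ≤ T, ∀ v, q t v = ∑ ub : Fin t → Fin k, pweight π P Φ y t (extPath (Fin.snoc ub v)) := by
  intro t
  induction t with
  | zero =>
    intro _ v
    simp [hq0, pweight, extPath_snoc_of_ge _ v le_rfl]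
  | succ t ih =>
    intro ht v
    rw [hqrec (t + 1) (by omega) ht v, Nat.add_sub_cancel, Finset.sum_mul,
      Fintype.sum_fin_succ_pi_eq_sum_snoc]
    refine Finset.sum_congr rfl fun u _ => ?_
    rw [ih (by omega) u, Finset.sum_mul, Finset.sum_mul]
    refine Finset.sum_congr rfl fun ub _ => ?_
    rw [pweight_extPath_snoc_snoc]
    ring

theorem sum_forward_mul_backward_succ (q qs : ℕ → Fin k → ℝ) (t : ℕ)
    (hq : ∀ v, q (t + 1) v = (∑ u, q t u * P (t + 1) u v) * Φ (t + 1) (y (t + 1)) v)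
    (hqs : ∀ u, qs t u = ∑ v, P (t + 1) u v * Φ (t + 1) (y (t + 1)) v * qs (t + 1) v) :
    ∑ u, q t u * qs t u = ∑ v, q (t + 1) v * qs (t + 1) v :=
  calc ∑ u, q t u * qs t u
      = ∑ u, ∑ v, q t u * (P (t + 1) u v * Φ (t + 1) (y (t + 1)) v * qs (t + 1) v) := by
        simp only [hqs, Finset.mul_sum]
    _ = ∑ v, ∑ u, q t u * (P (t + 1) u v * Φ (t + 1) (y (t + 1)) v * qs (t + 1) v) :=
        Finset.sum_comm
    _ = ∑ v, q (t + 1) v * qs (t + 1) v := by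
        refine Finset.sum_congr rfl fun v _ => ?_
        rw [hq, Finset.sum_mul, Finset.sum_mul]
        exact Finset.sum_congr rfl fun u _ => by ring

end pweight

theorem forward_backward_eq_manifest_general
    (k l T : ℕ)
    (π : Fin k → ℝ) (P : ℕ → Fin k → Fin k → ℝ) (Φ : ℕ → Fin l → Fin k → ℝ)
    (y : ℕ → Fin l) (q qs : ℕ → Fin k → ℝ)
    (hq0 : ∀ u, q 0 u = π u * Φ 0 (y 0) u)
    (hqrec : ∀ t, 1 ≤ t → t ≤ T → ∀ v,
      q t v = (∑ u, q (t - 1) u * P t u v) * Φ t (y t) v)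
    (hqsT : ∀ u, qs T u = 1)
    (hqsrec : ∀ t < T, ∀ u,
      qs t u = ∑ v, P (t + 1) u v * Φ (t + 1) (y (t + 1)) v * qs (t + 1) v) :
    ∀ t ≤ T,
      (∑ u, q t u * qs t u) = ∑ ub : Fin (T + 1) → Fin k, pweight π P Φ y T (extPath ub) := by
  intro t ht
  induction ht using Nat.decreasingInduction with
  | self =>
    simp only [hqsT, mul_one, Fintype.sum_fin_succ_pi_eq_sum_snoc]
    exact Finset.sum_congr rfl fun v _ => forward_eq_sum_pweight π P Φ y q hq0 hqrec T le_rfl v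
  | of_succ t ht ih =>
    rw [← ih]
    refine sum_forward_mul_backward_succ P Φ y q qs t (fun v => ?_) (hqsrec t ht)
    simpa using hqrec (t + 1) (by omega) ht v

/-- For every occasion `t`, the forward–backward decomposition
recovers the manifest probability: `Σ_u q(t,u)·q*(t,u) = f(y)`. -/
theorem forward_backward_eq_manifest
    (k l T : ℕ) (hk : 1 ≤ k) (hl : 1 ≤ l)
    (π : Fin k → ℝ) (P : ℕ → Fin k → Fin k → ℝ) (Φ : ℕ → Fin l → Fin k → ℝ)
    (y : ℕ → Fin l) (q qs : ℕ → Fin k → ℝ)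
    (hq0 : ∀ u, q 0 u = π u * Φ 0 (y 0) u)
    (hqrec : ∀ t, 1 ≤ t → t ≤ T → ∀ v,
      q t v = (∑ u, q (t - 1) u * P t u v) * Φ t (y t) v)
    (hqsT : ∀ u, qs T u = 1)
    (hqsrec : ∀ t < T, ∀ u,
      qs t u = ∑ v, P (t + 1) u v * Φ (t + 1) (y (t + 1)) v * qs (t + 1) v) :
    ∀ t ≤ T,
      (∑ u, q t u * qs t u) = ∑ ub : Fin (T + 1) → Fin k, pweight π P Φ y T (extPath ub) :=
  forward_backward_eq_manifest_general k l T π P Φ y q qs hq0 hqrec hqsT hqsrec
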